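/- Let B ⊂ X be a ball, σ ≥ 1, and w a nonnegative locally integrable function. Assume there exist α, β ∈ (0,1) such that w(B ∩ {x : α w(x) ≥ w_{σB}}) ≤ β w(σB). Then ∫_B (w − w_{σB})₊ dμ ≤ (1 − α(1 − β)) w(σB). -/

import Mathlib

open MeasureTheory Metric Set

variable {X : Type*}

/-- Integral average of `f` over `A` with respect to `μ`. -/
noncomputable def avgOn [MeasurableSpace X] (μ : Measure X) (f : X → ℝ) (A : Set X) : ℝ :=
  (∫ x in A, f x ∂μ) / (μ A).toReal

/-- `μ` is a doubling measure with doubling constant `Cμ > 1`. -/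
def IsDoubling [PseudoMetricSpace X] [MeasurableSpace X] (μ : Measure X) (Cμ : ℝ) : Prop :=
  1 < Cμ ∧ ∀ (x : X) (r : ℝ), 0 < r →
    0 < μ (ball x r) ∧ μ (ball x (2 * r)) ≤ ENNReal.ofReal Cμ * μ (ball x r) ∧
      μ (ball x r) < ⊤

/-!
Split `B` according to whether `α w ≥ c`, where `c = w_{σB} ≥ 0`. Where it holds,
`(w - c)₊ ≤ w`; where it fails, `w - c < (1 - α) w`. Hence
`(w - c)₊ ≤ (1 - α) w + α w 1_{α w ≥ c}` pointwise, and integrating over `B ⊆ σB` gives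
`∫_B (w - c)₊ ≤ (1 - α) w(σB) + α β w(σB)`.
-/

lemma ball_subset_ball_mul_of_one_le [PseudoMetricSpace X] {x : X} {r σ : ℝ} (hσ : 1 ≤ σ) :
    ball x r ⊆ ball x (σ * r) :=
  fun _ hy => ball_subset_ball (le_mul_of_one_le_left (pos_of_mem_ball hy).le hσ) hy

lemma avgOn_nonneg [MeasurableSpace X] {μ : Measure X} {f : X → ℝ} {A : Set X}
    (hf : ∀ x, 0 ≤ f x) : 0 ≤ avgOn μ f A :=
  div_nonneg (integral_nonneg hf) ENNReal.toReal_nonneg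

lemma max_sub_le_add_indicator {w : X → ℝ} {c α : ℝ} {x : X} (hwx : 0 ≤ w x) (hc : 0 ≤ c)
    (hα : α ≤ 1) :
    max (w x - c) 0 ≤ (1 - α) * w x + α * {y | c ≤ α * w y}.indicator w x := by
  by_cases hx : x ∈ {y | c ≤ α * w y}
  · rw [indicator_of_mem hx]
    exact max_le (by linarith) (by linarith)
  · have hlt : α * w x < c := not_le.mp hx
    rw [indicator_of_notMem hx]
    exact max_le (by linarith) (by nlinarith)

lemma setIntegral_max_sub_le [MeasurableSpace X] {μ : Measure X} {s : Set X} {w : X → ℝ}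
    {c α : ℝ} (hint : IntegrableOn w s μ) (hw : ∀ᵐ x ∂μ.restrict s, 0 ≤ w x) (hc : 0 ≤ c)
    (hα : α ≤ 1) :
    ∫ x in s, max (w x - c) 0 ∂μ ≤
      (1 - α) * ∫ x in s, w x ∂μ + α * ∫ x in s ∩ {x | c ≤ α * w x}, w x ∂μ := by
  set E := {x | c ≤ α * w x}
  have hE : NullMeasurableSet E (μ.restrict s) :=
    aestronglyMeasurable_const.nullMeasurableSet_le (hint.aestronglyMeasurable.const_mul α)
  have hEint : IntegrableOn (E.indicator w) s μ := hint.indicator₀ hE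
  have hmax_int : IntegrableOn (fun x => max (w x - c) 0) s μ := by
    refine hint.mono' ?_ ?_
    · exact (hint.aestronglyMeasurable.sub aestronglyMeasurable_const).sup
        aestronglyMeasurable_const
    · filter_upwards [hw] with x hx
      rw [Real.norm_of_nonneg (le_max_right _ _)]
      exact max_le (by linarith) hx
  calc ∫ x in s, max (w x - c) 0 ∂μ
      ≤ ∫ x in s, (1 - α) * w x + α * E.indicator w x ∂μ := by
        refine integral_mono_ae hmax_int ((hint.const_mul _).add (hEint.const_mul _)) ?_
        filter_upwards [hw] with x hx using max_sub_le_add_indicator hx hc hα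
    _ = (1 - α) * ∫ x in s, w x ∂μ + α * ∫ x in s ∩ E, w x ∂μ := by
        rw [integral_add (hint.const_mul _) (hEint.const_mul _), integral_const_mul,
          integral_const_mul, integral_indicator₀ hE, Measure.restrict_restrict₀ hE, inter_comm]

theorem weakAinf_implies_weakGR_general [MetricSpace X] [MeasurableSpace X]
    (μ : Measure X)
    (w : X → ℝ) (hw : ∀ x, 0 ≤ w x)
    (x₀ : X) (r : ℝ) (σ : ℝ) (hσ : 1 ≤ σ)
    (α β : ℝ) (hα0 : 0 < α) (hα1 : α < 1)
    (hA : ∫ x in ball x₀ r ∩ {x | avgOn μ w (ball x₀ (σ * r)) ≤ α * w x}, w x ∂μ ≤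
      β * ∫ x in ball x₀ (σ * r), w x ∂μ) :
    ∫ x in ball x₀ r, max (w x - avgOn μ w (ball x₀ (σ * r))) 0 ∂μ ≤
      (1 - α * (1 - β)) * ∫ x in ball x₀ (σ * r), w x ∂μ := by
  set c := avgOn μ w (ball x₀ (σ * r))
  have hsub : ball x₀ r ⊆ ball x₀ (σ * r) := ball_subset_ball_mul_of_one_le hσ
  by_cases hint : IntegrableOn w (ball x₀ (σ * r)) μ
  · have hmono : ∫ x in ball x₀ r, w x ∂μ ≤ ∫ x in ball x₀ (σ * r), w x ∂μ :=
      setIntegral_mono_set hint (ae_of_all _ hw) hsub.eventuallyLE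
    calc _ ≤ (1 - α) * ∫ x in ball x₀ r, w x ∂μ +
            α * ∫ x in ball x₀ r ∩ {x | c ≤ α * w x}, w x ∂μ :=
          setIntegral_max_sub_le (hint.mono_set hsub) (ae_of_all _ hw) (avgOn_nonneg hw) hα1.le
      _ ≤ (1 - α * (1 - β)) * ∫ x in ball x₀ (σ * r), w x ∂μ := by nlinarith
  · -- Off integrability the Bochner integral over `σB` is `0`, so `c = 0` and `hA` is the goal.
    have hI0 : ∫ x in ball x₀ (σ * r), w x ∂μ = 0 := integral_undef hint
    have hc0 : c = 0 := by simp only [c, avgOn, hI0, zero_div]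
    have hE : ball x₀ r ∩ {x | c ≤ α * w x} = ball x₀ r :=
      inter_eq_left.2 fun x _ => hc0 ▸ mul_nonneg hα0.le (hw x)
    rw [hE, hI0, mul_zero] at hA
    simpa only [hI0, mul_zero, hc0, sub_zero, max_eq_left (hw _)] using hA

/-- If there exist `α, β ∈ (0,1)` with `w(B ∩ {α w ≥ w_{σB}}) ≤ β w(σB)`, then
`∫_B (w − w_{σB})₊ dμ ≤ (1 − α(1 − β)) w(σB)`. -/
theorem weakAinf_implies_weakGR [MetricSpace X] [MeasurableSpace X] [BorelSpace X]
    (μ : Measure X) (Cμ : ℝ) (hμ : IsDoubling μ Cμ)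
    (w : X → ℝ) (hw : ∀ x, 0 ≤ w x) (hloc : LocallyIntegrable w μ)
    (x₀ : X) (r : ℝ) (hr : 0 < r) (σ : ℝ) (hσ : 1 ≤ σ)
    (α β : ℝ) (hα0 : 0 < α) (hα1 : α < 1) (hβ0 : 0 < β) (hβ1 : β < 1)
    (hA : ∫ x in ball x₀ r ∩ {x | avgOn μ w (ball x₀ (σ * r)) ≤ α * w x}, w x ∂μ ≤
      β * ∫ x in ball x₀ (σ * r), w x ∂μ) :
    ∫ x in ball x₀ r, max (w x - avgOn μ w (ball x₀ (σ * r))) 0 ∂μ ≤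
      (1 - α * (1 - β)) * ∫ x in ball x₀ (σ * r), w x ∂μ :=
  weakAinf_implies_weakGR_general μ w hw x₀ r σ hσ α β hα0 hα1 hA
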